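/- arXiv:1911.05410 — 10 statements merged into one kernel-verified Lean document; each statement's English description precedes it below -/
import Mathlib

section
/- Let f : ℝ → ℝ be twice differentiable on an interval I with f > 0, f' never zero, and satisfying the α-catenary equation f'' / (1 + f'^2) = α/f for a constant α ≠ 0. Then there is a constant C such that f(s)^(2α) = C·(1 + f'(s)^2) on I (i.e. (1+f'^2)·f^(−2α) is a first integral). -/
open Set

/-! The quantity `f ^ (2α) / (1 + f'^2)` has derivative
`f ^ (2α) f' (2α (1 + f'^2) - 2 f f'') / (f (1 + f'^2)^2)`, and the catenary equation
`f f'' = α (1 + f'^2)` makes the bracket vanish; a function with zero derivative on an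
interval is constant. -/

theorem hasDerivAt_rpow_div_one_add_sq_eq_zero {α x w : ℝ} {f v : ℝ → ℝ} (hfx : 0 < f x)
    (hf : HasDerivAt f (v x) x) (hv : HasDerivAt v w x)
    (hcat : w / (1 + v x ^ 2) = α / f x) :
    HasDerivAt (fun t => f t ^ (2 * α) / (1 + v t ^ 2)) 0 x := by
  have hden : 1 + v x ^ 2 ≠ 0 := by positivity
  have hw : w = α * (1 + v x ^ 2) / f x := by
    field_simp at hcat ⊢
    linarith
  refine ((hf.rpow_const (Or.inl hfx.ne')).div ((hv.pow 2).const_add 1) hden).congr_deriv ?_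
  rw [hw, Real.rpow_sub_one hfx.ne', Pi.pow_apply]
  field_simp
  ring

theorem stmt2_general (a b α : ℝ) (f : ℝ → ℝ)
    (hf : ContDiffOn ℝ 2 f (Ioo a b))
    (hpos : ∀ s ∈ Ioo a b, 0 < f s)
    (heq : ∀ s ∈ Ioo a b,
      deriv (deriv f) s / (1 + (deriv f s) ^ 2) = α / f s) :
    ∃ C : ℝ, ∀ s ∈ Ioo a b, f s ^ (2 * α) = C * (1 + (deriv f s) ^ 2) := by
  obtain ⟨hdf, -, hdf'⟩ := (contDiffOn_succ_iff_deriv_of_isOpen (n := 1) isOpen_Ioo).1 hf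
  have hzero : ∀ s ∈ Ioo a b,
      HasDerivAt (fun t => f t ^ (2 * α) / (1 + deriv f t ^ 2)) 0 s := fun s hs =>
    have hs' := isOpen_Ioo.mem_nhds hs
    hasDerivAt_rpow_div_one_add_sq_eq_zero (hpos s hs) (hdf.differentiableAt hs').hasDerivAt
      ((hdf'.differentiableOn one_ne_zero).differentiableAt hs').hasDerivAt (heq s hs)
  obtain ⟨C, hC⟩ := isOpen_Ioo.exists_is_const_of_deriv_eq_zero isPreconnected_Ioo
    (fun s hs => (hzero s hs).differentiableAt.differentiableWithinAt)
    (fun s hs => (hzero s hs).deriv)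
  refine ⟨C, fun s hs => ?_⟩
  rw [← hC s hs, div_mul_cancel₀]
  positivity

/-- First integral of the `α`-catenary equation:
if `f'' / (1 + f'^2) = α / f` with `f > 0`, `f' ≠ 0`, `α ≠ 0`, then
`f ^ (2α) = C (1 + f'^2)` for some constant `C`. -/
theorem stmt2 (a b α : ℝ) (hab : a < b) (hα : α ≠ 0) (f : ℝ → ℝ)
    (hf : ContDiffOn ℝ 2 f (Ioo a b))
    (hpos : ∀ s ∈ Ioo a b, 0 < f s)
    (hf' : ∀ s ∈ Ioo a b, deriv f s ≠ 0)
    (heq : ∀ s ∈ Ioo a b,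
      deriv (deriv f) s / (1 + (deriv f s) ^ 2) = α / f s) :
    ∃ C : ℝ, ∀ s ∈ Ioo a b, f s ^ (2 * α) = C * (1 + (deriv f s) ^ 2) :=
  stmt2_general a b α f hf hpos heq
end

section
/- A singular minimal cylinder M^n in ℝ^{n+1} with respect to a fixed unit vector u (i.e. a generalized cylinder whose mean curvature satisfies nH = α·⟨ξ,u⟩/⟨σ,u⟩ with α ≠ 0) is either a hyperplane parallel to u, or its base curve γ satisfies the α-catenary equation κ(s) = α·⟨N(s),u⟩/⟨γ(s),u⟩ and u is orthogonal to all ruling directions w₁,…,w_{n−1}. -/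
/-!
The singular minimal equation `κ(s)·(∑ tᵢ⟨wᵢ,u⟩ + ⟨γ(s),u⟩) = α⟨N(s),u⟩` is affine in the
ruling parameters `t`, while its right-hand side does not depend on `t`. Comparing `t = 0` with
`t = eᵢ` gives `κ(s)·⟨wᵢ,u⟩ = 0`. So either every ruling is orthogonal to `u`, and `t = 0` is the
`α`-catenary equation, or `κ ≡ 0`, and then `α ≠ 0` forces `⟨N,u⟩ ≡ 0`.
-/

section AffineIdentity

variable {R ι : Type*} [CommRing R] [Fintype ι] {k b a : R} {c : ι → R}

theorem mul_eq_of_forall_mul_sum_add_eq (h : ∀ t : ι → R, k * (∑ i, t i * c i + b) = a) :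
    k * b = a := by
  simpa using h 0

theorem mul_coeff_eq_zero_of_forall_mul_sum_add_eq
    (h : ∀ t : ι → R, k * (∑ i, t i * c i + b) = a) (i : ι) : k * c i = 0 := by
  classical
  have hi : k * (c i + b) = a := by simpa [Pi.single_apply] using h (Pi.single i 1)
  have h0 := mul_eq_of_forall_mul_sum_add_eq h
  linear_combination hi - h0

end AffineIdentity

theorem stmt5_general (n : ℕ) (α : ℝ) (hα : α ≠ 0)
    (u : EuclideanSpace ℝ (Fin (n + 1)))
    (w : Fin (n - 1) → EuclideanSpace ℝ (Fin (n + 1)))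
    (γ N : ℝ → EuclideanSpace ℝ (Fin (n + 1))) (κ : ℝ → ℝ)
    (hpos : ∀ s, 0 < (inner ℝ (γ s) u : ℝ))
    (hSM : ∀ s, ∀ t : Fin (n - 1) → ℝ,
      κ s * ((∑ i, t i * (inner ℝ (w i) u : ℝ)) + (inner ℝ (γ s) u : ℝ))
        = α * (inner ℝ (N s) u : ℝ)) :
    (∀ s, κ s = 0 ∧ (inner ℝ (N s) u : ℝ) = 0) ∨
      ((∀ i, (inner ℝ (w i) u : ℝ) = 0) ∧
        ∀ s, κ s = α * (inner ℝ (N s) u : ℝ) / (inner ℝ (γ s) u : ℝ)) := by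
  have hcatenary s := mul_eq_of_forall_mul_sum_add_eq (hSM s)
  by_cases hruling : ∀ i, (inner ℝ (w i) u : ℝ) = 0
  · exact .inr ⟨hruling, fun s => (eq_div_iff (hpos s).ne').2 (hcatenary s)⟩
  · obtain ⟨i, hi⟩ := not_forall.1 hruling
    refine .inl fun s => ?_
    have hκ : κ s = 0 :=
      (mul_eq_zero.1 (mul_coeff_eq_zero_of_forall_mul_sum_add_eq (hSM s) i)).resolve_right hi
    have hN := hcatenary s
    rw [hκ, zero_mul] at hN
    exact ⟨hκ, (mul_eq_zero.1 hN.symm).resolve_left hα⟩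

/-- Theorem 3.1: A singular minimal generalized cylinder in
`ℝ^{n+1}`, i.e. `σ(s,t) = γ(s) + ∑ tᵢ wᵢ` with `w₁,…,w_{n−1}` orthonormal,
`γ` a unit-speed curve in `Γ = span{w}^⊥` with Frenet frame `T, N` and
curvature `κ`, satisfying the singular minimal equation `nH = α⟨ξ,u⟩/⟨σ,u⟩`
(which, since `H = κ/n` and `ξ = N`, reads
`κ(s)·(∑ tᵢ⟨wᵢ,u⟩ + ⟨γ(s),u⟩) = α⟨N(s),u⟩` for all `s, t`), is either a
hyperplane parallel to `u` (`κ ≡ 0` and `⟨N,u⟩ ≡ 0`) or an `α`-catenary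
cylinder whose rulings are orthogonal to `u` (`⟨wᵢ,u⟩ = 0` for all `i` and
`κ = α⟨N,u⟩/⟨γ,u⟩`). -/
theorem stmt5 (n : ℕ) (hn : 2 ≤ n) (α : ℝ) (hα : α ≠ 0)
    (u : EuclideanSpace ℝ (Fin (n + 1))) (hu : ‖u‖ = 1)
    (w : Fin (n - 1) → EuclideanSpace ℝ (Fin (n + 1))) (hw : Orthonormal ℝ w)
    (γ T N : ℝ → EuclideanSpace ℝ (Fin (n + 1))) (κ : ℝ → ℝ)
    (hT : ∀ s, HasDerivAt γ (T s) s)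
    (hTunit : ∀ s, ‖T s‖ = 1) (hNunit : ∀ s, ‖N s‖ = 1)
    (hTN : ∀ s, (inner ℝ (T s) (N s) : ℝ) = 0)
    (hfrenet : ∀ s, HasDerivAt T (κ s • N s) s)
    (hplane : ∀ s, ∀ i, (inner ℝ (γ s) (w i) : ℝ) = 0 ∧
        (inner ℝ (T s) (w i) : ℝ) = 0 ∧ (inner ℝ (N s) (w i) : ℝ) = 0)
    (hpos : ∀ s, 0 < (inner ℝ (γ s) u : ℝ))
    (hSM : ∀ s, ∀ t : Fin (n - 1) → ℝ,
      κ s * ((∑ i, t i * (inner ℝ (w i) u : ℝ)) + (inner ℝ (γ s) u : ℝ))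
        = α * (inner ℝ (N s) u : ℝ)) :
    (∀ s, κ s = 0 ∧ (inner ℝ (N s) u : ℝ) = 0) ∨
      ((∀ i, (inner ℝ (w i) u : ℝ) = 0) ∧
        ∀ s, κ s = α * (inner ℝ (N s) u : ℝ) / (inner ℝ (γ s) u : ℝ)) :=
  stmt5_general n α hα u w γ N κ hpos hSM
end

section
/- Let f₁,…,f_n be smooth functions on open intervals (with x₁ > 0 on the domain of f₁) satisfying the singular minimal translation hypersurface equation ∑ᵢ (1 + ∑_{j≠i}(f_j')²)·f_i'' = (−α f₁'/x₁)·(1 + ∑ᵢ(f_i')²) with α ≠ 0. If f₁'' = 0 identically and f₁' ≠ 0, then a contradiction follows; hence f₁' is not a nonzero constant. -/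
open Set Finset

/-- In the singular minimal translation hypersurface equation
`∑ᵢ (1 + ∑_{j≠i}(fⱼ')²) fᵢ'' = (−α f₁'/x₁)(1 + ∑ᵢ(fᵢ')²)` with `α ≠ 0` and
`x₁ > 0`, the case `f₁'' ≡ 0` with `f₁' ≠ 0` is impossible. -/
theorem stmt7 (n : ℕ) (hn : 2 ≤ n) (α : ℝ) (hα : α ≠ 0)
    (f : Fin n → ℝ → ℝ) (hf : ∀ i, ContDiff ℝ (⊤ : ℕ∞) (f i))
    (a b : Fin n → ℝ) (hab : ∀ i, a i < b i)
    (i₀ : Fin n) (hi₀ : (i₀ : ℕ) = 0) (h0 : 0 < a i₀)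
    (hSM : ∀ x : Fin n → ℝ, (∀ i, x i ∈ Ioo (a i) (b i)) →
      ∑ i : Fin n, (1 + ∑ j ∈ univ.erase i, (deriv (f j) (x j)) ^ 2)
          * deriv (deriv (f i)) (x i)
        = (-α * deriv (f i₀) (x i₀) / x i₀) *
            (1 + ∑ i : Fin n, (deriv (f i) (x i)) ^ 2))
    (hf1'' : ∀ t ∈ Ioo (a i₀) (b i₀), deriv (deriv (f i₀)) t = 0)
    (hf1' : ∀ t ∈ Ioo (a i₀) (b i₀), deriv (f i₀) t ≠ 0) :
    False := by
  -- midpoints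
  set m : Fin n → ℝ := fun i => (a i + b i) / 2 with hm_def
  have hm : ∀ i, m i ∈ Ioo (a i) (b i) := by
    intro i; constructor <;> · simp only [hm_def]; linarith [hab i]
  -- f i₀ has constant derivative on the interval
  have hgdiff : Differentiable ℝ (deriv (f i₀)) :=
    ((contDiff_infty_iff_deriv.mp ((hf i₀).of_le (by simp))).2).differentiable
      (by simp)
  set c : ℝ := deriv (f i₀) (m i₀) with hc_def
  have hconst : ∀ t ∈ Ioo (a i₀) (b i₀), deriv (f i₀) t = c := by
    intro t ht
    have := (convex_Ioo (a i₀) (b i₀)).is_const_of_fderivWithin_eq_zero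
      (f := deriv (f i₀)) hgdiff.differentiableOn ?_ ht (hm i₀)
    · exact this
    · intro y hy
      rw [fderivWithin_of_isOpen isOpen_Ioo hy]
      have h1 : HasDerivAt (deriv (f i₀)) (deriv (deriv (f i₀)) y) y :=
        (hgdiff y).hasDerivAt
      rw [hf1'' y hy] at h1
      rw [h1.hasFDerivAt.fderiv]
      ext
      simp
  have hc0 : c ≠ 0 := hf1' (m i₀) (hm i₀)
  -- two points
  set t₁ : ℝ := m i₀ with ht₁_def
  set t₂ : ℝ := (a i₀ + 3 * b i₀) / 4 with ht₂_def
  have ht₁ : t₁ ∈ Ioo (a i₀) (b i₀) := hm i₀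
  have ht₂ : t₂ ∈ Ioo (a i₀) (b i₀) := by
    constructor <;> · simp only [ht₂_def]; linarith [hab i₀]
  have htne : t₁ ≠ t₂ := by
    have := hab i₀
    simp only [ht₁_def, ht₂_def, hm_def]
    intro h; nlinarith
  -- coordinates
  have hx : ∀ t ∈ Ioo (a i₀) (b i₀), ∀ i, Function.update m i₀ t i ∈ Ioo (a i) (b i) := by
    intro t ht i
    by_cases h : i = i₀
    · subst h; simpa using ht
    · rw [Function.update_of_ne h]; exact hm i
  have E₁ := hSM (Function.update m i₀ t₁) (hx t₁ ht₁)
  have E₂ := hSM (Function.update m i₀ t₂) (hx t₂ ht₂)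
  -- LHS are equal
  have hLHS : ∀ t ∈ Ioo (a i₀) (b i₀),
      ∑ i : Fin n, (1 + ∑ j ∈ univ.erase i,
          (deriv (f j) (Function.update m i₀ t j)) ^ 2)
        * deriv (deriv (f i)) (Function.update m i₀ t i)
      = ∑ i : Fin n, (1 + ∑ j ∈ univ.erase i,
          (deriv (f j) (Function.update m i₀ (m i₀) j)) ^ 2)
        * deriv (deriv (f i)) (Function.update m i₀ (m i₀) i) := by
    intro t ht
    apply Finset.sum_congr rfl
    intro i _
    by_cases hi : i = i₀
    · rw [hi, Function.update_self, Function.update_self, hf1'' t ht,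
        hf1'' (m i₀) (hm i₀)]
      ring
    · rw [Function.update_of_ne hi, Function.update_of_ne hi]
      congr 2
      apply Finset.sum_congr rfl
      intro j hj
      by_cases hji : j = i₀
      · rw [hji, Function.update_self, Function.update_self, hconst t ht,
          hconst (m i₀) (hm i₀)]
      · rw [Function.update_of_ne hji, Function.update_of_ne hji]
  -- RHS sum is equal
  have hK : ∀ t ∈ Ioo (a i₀) (b i₀),
      ∑ i : Fin n, (deriv (f i) (Function.update m i₀ t i)) ^ 2
      = ∑ i : Fin n, (deriv (f i) (Function.update m i₀ (m i₀) i)) ^ 2 := by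
    intro t ht
    apply Finset.sum_congr rfl
    intro i _
    by_cases hi : i = i₀
    · rw [hi, Function.update_self, Function.update_self, hconst t ht,
        hconst (m i₀) (hm i₀)]
    · rw [Function.update_of_ne hi, Function.update_of_ne hi]
  set K : ℝ := 1 + ∑ i : Fin n, (deriv (f i) (Function.update m i₀ (m i₀) i)) ^ 2 with hK_def
  have hKpos : 0 < K := by
    have : 0 ≤ ∑ i : Fin n, (deriv (f i) (Function.update m i₀ (m i₀) i)) ^ 2 :=
      Finset.sum_nonneg fun i _ => sq_nonneg _
    simp only [hK_def]; linarith
  rw [hLHS t₁ ht₁] at E₁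
  rw [Function.update_self] at E₁
  rw [hconst t₁ ht₁] at E₁
  rw [hLHS t₂ ht₂] at E₂
  rw [Function.update_self] at E₂
  rw [hconst t₂ ht₂] at E₂
  rw [hK t₂ ht₂] at E₂
  have hEq : -α * c / t₁ * K = -α * c / t₂ * K := by
    rw [← E₁, ← E₂]
  have ht₁pos : 0 < t₁ := lt_trans h0 ht₁.1
  have ht₂pos : 0 < t₂ := lt_trans h0 ht₂.1
  apply htne
  have hαc : -α * c ≠ 0 := by
    simp only [neg_mul, neg_ne_zero]
    exact mul_ne_zero hα hc0
  field_simp at hEq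
  exact (neg_inj.mp hEq.symm)
end

section
/- Suppose smooth functions f₁,…,f_n (with f₁'' ≠ 0, α ≠ 0) satisfy for some index k ≥ 2 and all points in a product of intervals: 2 f_k' f_k'' ∑_{i≠k} f_i'' + (1 + ∑_{i≠k}(f_i')²)·f_k''' = (−2α f₁'/x₁)·f_k' f_k''. If f_k'' is nowhere zero and f_k' is nowhere zero, then there exists a constant ν_k with f_k''' = 2ν_k f_k' f_k'' on the domain of f_k. -/
open Set Finset

/-- Eq. (4.4) → Eq. (4.6): if smooth `f₁,…,f_n` satisfy, for an
index `k ≠ 1` and on a product of intervals (with `x₁ > 0`),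
`2 f_k' f_k'' ∑_{i≠k} f_i'' + (1 + ∑_{i≠k}(f_i')²) f_k''' = (−2α f₁'/x₁) f_k' f_k''`,
with `f₁''`, `f_k'`, `f_k''` nowhere zero and `α ≠ 0`, then
`f_k''' = 2 ν_k f_k' f_k''` for some constant `ν_k`. -/
theorem stmt8 (n : ℕ) (hn : 2 ≤ n) (α : ℝ) (hα : α ≠ 0)
    (f : Fin n → ℝ → ℝ) (hf : ∀ i, ContDiff ℝ (⊤ : ℕ∞) (f i))
    (a b : Fin n → ℝ) (hab : ∀ i, a i < b i)
    (i₀ : Fin n) (hi₀ : (i₀ : ℕ) = 0) (h0 : 0 < a i₀)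
    (k : Fin n) (hk : k ≠ i₀)
    (heq : ∀ x : Fin n → ℝ, (∀ i, x i ∈ Ioo (a i) (b i)) →
      2 * deriv (f k) (x k) * deriv (deriv (f k)) (x k) *
          (∑ i ∈ univ.erase k, deriv (deriv (f i)) (x i))
        + (1 + ∑ i ∈ univ.erase k, (deriv (f i) (x i)) ^ 2) *
            deriv (deriv (deriv (f k))) (x k)
        = (-2 * α * deriv (f i₀) (x i₀) / x i₀) *
            (deriv (f k) (x k) * deriv (deriv (f k)) (x k)))
    (hf1'' : ∀ t ∈ Ioo (a i₀) (b i₀), deriv (deriv (f i₀)) t ≠ 0)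
    (hfk'' : ∀ t ∈ Ioo (a k) (b k), deriv (deriv (f k)) t ≠ 0)
    (hfk' : ∀ t ∈ Ioo (a k) (b k), deriv (f k) t ≠ 0) :
    ∃ ν : ℝ, ∀ t ∈ Ioo (a k) (b k),
      deriv (deriv (deriv (f k))) t = 2 * ν * deriv (f k) t * deriv (deriv (f k)) t := by
  classical
  set g : ℝ → ℝ := deriv (f i₀) with hg
  set I : Set ℝ := Ioo (a i₀) (b i₀) with hI
  -- midpoints
  set m : Fin n → ℝ := fun i => (a i + b i) / 2 with hmdef
  have hm : ∀ i, m i ∈ Ioo (a i) (b i) := by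
    intro i
    constructor <;> · simp only [hmdef]; linarith [hab i]
  have hi₀mem : i₀ ∈ univ.erase k := by
    simp [Finset.mem_erase, Ne.symm hk]
  set C₂ : ℝ := ∑ i ∈ (univ.erase k).erase i₀, deriv (deriv (f i)) (m i) with hC₂
  set C₁ : ℝ := ∑ i ∈ (univ.erase k).erase i₀, (deriv (f i) (m i)) ^ 2 with hC₁
  set P : ℝ → ℝ := fun t => deriv (f k) t * deriv (deriv (f k)) t with hP
  set Q : ℝ → ℝ := fun t => deriv (deriv (deriv (f k))) t with hQ
  -- the key pointwise identity with all other variables frozen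
  have key : ∀ s ∈ I, ∀ t ∈ Ioo (a k) (b k),
      2 * P t * (deriv (deriv (f i₀)) s + C₂) + (1 + g s ^ 2 + C₁) * Q t
        = (-2 * α * g s / s) * P t := by
    intro s hs t ht
    set x : Fin n → ℝ := fun i => if i = i₀ then s else if i = k then t else m i with hx
    have hxmem : ∀ i, x i ∈ Ioo (a i) (b i) := by
      intro i
      by_cases h1 : i = i₀
      · subst h1; simpa [hx, hI] using hs
      · by_cases h2 : i = k
        · subst h2; simpa [hx, h1] using ht
        · simpa [hx, h1, h2] using hm i
    have hxk : x k = t := by simp [hx, hk]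
    have hxi₀ : x i₀ = s := by simp [hx]
    have h := heq x hxmem
    rw [hxk, hxi₀] at h
    have hsum2 : (∑ i ∈ univ.erase k, deriv (deriv (f i)) (x i))
        = deriv (deriv (f i₀)) s + C₂ := by
      rw [← Finset.add_sum_erase _ _ hi₀mem, hxi₀, hC₂]
      congr 1
      refine Finset.sum_congr rfl fun i hi => ?_
      have h1 : i ≠ i₀ := (Finset.mem_erase.mp hi).1
      have h2 : i ≠ k := (Finset.mem_erase.mp (Finset.mem_erase.mp hi).2).1
      simp [hx, h1, h2]
    have hsum1 : (∑ i ∈ univ.erase k, (deriv (f i) (x i)) ^ 2)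
        = g s ^ 2 + C₁ := by
      rw [← Finset.add_sum_erase _ _ hi₀mem, hxi₀, hC₁]
      congr 1
      refine Finset.sum_congr rfl fun i hi => ?_
      have h1 : i ≠ i₀ := (Finset.mem_erase.mp hi).1
      have h2 : i ≠ k := (Finset.mem_erase.mp (Finset.mem_erase.mp hi).2).1
      simp [hx, h1, h2]
    rw [hsum2, hsum1] at h
    calc 2 * P t * (deriv (deriv (f i₀)) s + C₂) + (1 + g s ^ 2 + C₁) * Q t
        = 2 * deriv (f k) t * deriv (deriv (f k)) t * (deriv (deriv (f i₀)) s + C₂)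
          + (1 + (g s ^ 2 + C₁)) * deriv (deriv (deriv (f k))) t := by
          simp only [hP, hQ]; ring
      _ = (-2 * α * g s / s) * P t := by rw [h]
  -- g is differentiable with derivative f₁''
  have hgd : Differentiable ℝ g := (contDiff_infty_iff_deriv.mp ((hf i₀).of_le (by simp))).2.differentiable (by norm_num)
  have hIopen : IsOpen I := isOpen_Ioo
  -- find two points with different squares of g
  obtain ⟨s₀, hs₀, s₁, hs₁, hne⟩ : ∃ s₀ ∈ I, ∃ s₁ ∈ I, g s₀ ^ 2 ≠ g s₁ ^ 2 := by
    by_contra hcon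
    push_neg at hcon
    -- g ^ 2 is constant on I
    have hzero : ∀ s ∈ I, g s = 0 := by
      intro s hs
      have hev : (fun u => g u ^ 2) =ᶠ[nhds s] fun _ => g s ^ 2 := by
        filter_upwards [hIopen.mem_nhds hs] with u hu
        exact hcon u hu s hs
      have hd0 : deriv (fun u => g u ^ 2) s = 0 := by
        rw [hev.deriv_eq]; simp
      have hdd : HasDerivAt (fun u => g u ^ 2)
          (2 * g s ^ 1 * deriv g s) s := by
        have := ((hgd s).hasDerivAt).pow 2
        simpa [Pi.pow_def] using this
      have := hdd.deriv
      rw [hd0] at this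
      have h2 : (2 : ℝ) * g s ^ 1 * deriv g s = 0 := this.symm
      have hne' : deriv g s ≠ 0 := hf1'' s hs
      have := mul_eq_zero.mp h2
      rcases this with h | h
      · rcases mul_eq_zero.mp h with h' | h'
        · norm_num at h'
        · simpa using h'
      · exact absurd h hne'
    -- then g = 0 near m i₀, so its derivative vanishes there: contradiction
    have hmm := hm i₀
    have hev : g =ᶠ[nhds (m i₀)] fun _ => (0 : ℝ) := by
      filter_upwards [hIopen.mem_nhds hmm] with u hu
      exact hzero u hu
    have : deriv g (m i₀) = 0 := by rw [hev.deriv_eq]; simp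
    exact hf1'' (m i₀) hmm this
  -- subtract the two instances of the identity
  set A₀ := deriv (deriv (f i₀)) s₀ with hA₀
  set A₁ := deriv (deriv (f i₀)) s₁ with hA₁
  set B₀ := -2 * α * g s₀ / s₀ with hB₀
  set B₁ := -2 * α * g s₁ / s₁ with hB₁
  have hD : g s₀ ^ 2 - g s₁ ^ 2 ≠ 0 := sub_ne_zero.mpr hne
  refine ⟨(B₀ - B₁ - 2 * (A₀ - A₁)) / (g s₀ ^ 2 - g s₁ ^ 2) / 2, ?_⟩
  intro t ht
  have h₀ := key s₀ hs₀ t ht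
  have h₁ := key s₁ hs₁ t ht
  have hlin : (g s₀ ^ 2 - g s₁ ^ 2) * Q t = (B₀ - B₁ - 2 * (A₀ - A₁)) * P t := by
    linear_combination h₀ - h₁
  have hPt : P t = deriv (f k) t * deriv (deriv (f k)) t := rfl
  have hQt : Q t = deriv (deriv (deriv (f k))) t := rfl
  rw [hPt] at hlin
  rw [← hQt]
  clear_value A₀ A₁ B₀ B₁ Q
  have hdiv : Q t = (B₀ - B₁ - 2 * (A₀ - A₁)) * (deriv (f k) t * deriv (deriv (f k)) t)
      / (g s₀ ^ 2 - g s₁ ^ 2) := by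
    rw [eq_div_iff hD]
    linear_combination hlin
  rw [hdiv]
  ring
end

section
/- There are no smooth functions f : I → ℝ (I ⊆ (0,∞) an open interval) and constants α ≠ 0, λ̃ ≠ 0, n ≥ 2 satisfying simultaneously on I: f'' + α f'/x = λ̃(2−n) and λ̃(n−1)(f')² + α(f')³/x + λ̃ = 0. -/
open Set

/-- there is no smooth `f` on an interval `I ⊆ (0,∞)` and
constants `α ≠ 0`, `λ̃ ≠ 0`, `n ≥ 2` satisfying simultaneously
`f'' + α f'/x = λ̃(2−n)` and `λ̃(n−1)(f')² + α(f')³/x + λ̃ = 0` on `I`. -/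
theorem stmt10 (a b α lam : ℝ) (n : ℕ) (hn : 2 ≤ n)
    (ha : 0 < a) (hab : a < b) (hα : α ≠ 0) (hlam : lam ≠ 0)
    (f : ℝ → ℝ) (hf : ContDiffOn ℝ (⊤ : ℕ∞) f (Ioo a b))
    (h1 : ∀ x ∈ Ioo a b,
      deriv (deriv f) x + α * deriv f x / x = lam * (2 - (n : ℝ)))
    (h2 : ∀ x ∈ Ioo a b,
      lam * ((n : ℝ) - 1) * (deriv f x) ^ 2 + α * (deriv f x) ^ 3 / x + lam = 0) :
    False := by
  have hO : IsOpen (Ioo a b) := isOpen_Ioo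
  set u := deriv f with hu
  have hcd : ContDiffOn ℝ (⊤ : ℕ∞) u (Ioo a b) := hf.deriv_of_isOpen hO (by simp)
  have hud : ∀ x ∈ Ioo a b, HasDerivAt u (deriv u x) x := fun x hx =>
    ((hcd.differentiableOn (by norm_num)).differentiableAt (hO.mem_nhds hx)).hasDerivAt
  have hcont : ContinuousOn u (Ioo a b) := hcd.continuousOn
  have hx0 : ∀ x ∈ Ioo a b, x ≠ 0 := fun x hx => ne_of_gt (ha.trans hx.1)
  have hune : ∀ x ∈ Ioo a b, u x ≠ 0 := by
    intro x hx h0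
    have h := h2 x hx
    rw [h0] at h
    simp at h
    exact hlam h
  -- The key pointwise quadratic relation, obtained by differentiating h2
  -- and substituting h1.
  have key : ∀ x ∈ Ioo a b,
      2*(lam*((n:ℝ)-1))*(lam*(2-(n:ℝ)))*x^2
        + α*(3*(lam*(2-(n:ℝ))) - 2*(lam*((n:ℝ)-1)))*(u x)*x
        - (3*α^2+α)*(u x)^2 = 0 := by
    intro x hx
    have hxne := hx0 x hx
    have hUne := hune x hx
    have hU := hud x hx
    have hG : HasDerivAt (fun y => lam * ((n:ℝ)-1) * u y ^ 2 + α * u y ^ 3 / y + lam)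
        ((lam * ((n:ℝ)-1)) * ((2:ℕ) * u x ^ (2-1) * deriv u x)
          + (((α * ((3:ℕ) * u x ^ (3-1) * deriv u x)) * x - (α * u x ^ 3) * 1) / x ^ 2)) x := by
      exact (((hU.pow 2).const_mul (lam*((n:ℝ)-1))).add
        (((hU.pow 3).const_mul α).div (hasDerivAt_id' x) hxne)).add_const lam
    have hzero : HasDerivAt (fun y => lam * ((n:ℝ)-1) * u y ^ 2 + α * u y ^ 3 / y + lam) 0 x := by
      refine (hasDerivAt_const x (0:ℝ)).congr_of_eventuallyEq ?_
      filter_upwards [hO.mem_nhds hx] with y hy using (h2 y hy)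
    have R3 := hG.unique hzero
    have R1 := h1 x hx
    field_simp at R3 R1
    have keyx : u x * (2*(lam*((n:ℝ)-1))*(lam*(2-(n:ℝ)))*x^2
          + α*(3*(lam*(2-(n:ℝ))) - 2*(lam*((n:ℝ)-1)))*(u x)*x
          - (3*α^2+α)*(u x)^2) = 0 := by
      linear_combination R3 - (2*(lam*((n:ℝ)-1))*(u x)*x + 3*α*(u x)^2) * R1
    exact (mul_eq_zero.mp keyx).resolve_left hUne
  -- Hence t = u/x takes values in the (finite) root set of a nonzero quadratic.
  set A : ℝ := 3*α^2+α with hA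
  set B : ℝ := α*(3*(lam*(2-(n:ℝ))) - 2*(lam*((n:ℝ)-1))) with hB
  set C : ℝ := 2*(lam*((n:ℝ)-1))*(lam*(2-(n:ℝ))) with hC
  have hB0 : B ≠ 0 := by
    have h8 : (8:ℝ) - 5*(n:ℝ) ≠ 0 := by
      have : (2:ℝ) ≤ (n:ℝ) := by exact_mod_cast hn
      nlinarith
    have : B = α * lam * (8 - 5*(n:ℝ)) := by rw [hB]; ring
    rw [this]
    exact mul_ne_zero (mul_ne_zero hα hlam) h8
  set p : Polynomial ℝ := Polynomial.C (-A) * Polynomial.X^2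
      + Polynomial.C B * Polynomial.X + Polynomial.C C with hp
  have hpne : p ≠ 0 := by
    intro h
    have : p.coeff 1 = B := by
      rw [hp]; simp [Polynomial.coeff_X, Polynomial.coeff_C]
    rw [h] at this
    simp at this
    exact hB0 this.symm
  have hSfin : {y : ℝ | p.IsRoot y}.Finite := Polynomial.finite_setOf_isRoot hpne
  set t : ℝ → ℝ := fun x => u x / x with ht
  have htS : ∀ x ∈ Ioo a b, t x ∈ {y : ℝ | p.IsRoot y} := by
    intro x hx
    have hk := key x hx
    have hxne := hx0 x hx
    simp only [mem_setOf_eq, Polynomial.IsRoot, hp, ht]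
    simp only [Polynomial.eval_add, Polynomial.eval_mul, Polynomial.eval_pow,
      Polynomial.eval_C, Polynomial.eval_X]
    field_simp
    linear_combination hk
  have htcont : ContinuousOn t (Ioo a b) :=
    hcont.div (continuousOn_id) (fun x hx => hx0 x hx)
  -- t is constant on the interval, since it is continuous with values in a finite set.
  have htc : ∀ x₁ ∈ Ioo a b, ∀ x₂ ∈ Ioo a b, t x₁ = t x₂ := by
    intro x₁ hx₁ x₂ hx₂
    by_contra hne
    have hsub : uIcc x₁ x₂ ⊆ Ioo a b := (ordConnected_Ioo).uIcc_subset hx₁ hx₂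
    have himg : uIcc (t x₁) (t x₂) ⊆ t '' uIcc x₁ x₂ :=
      intermediate_value_uIcc (htcont.mono hsub)
    have hreach : uIcc (t x₁) (t x₂) ⊆ {y : ℝ | p.IsRoot y} := by
      refine himg.trans ?_
      rintro y ⟨z, hz, rfl⟩
      exact htS z (hsub hz)
    have hinf : (uIcc (t x₁) (t x₂)).Infinite := by
      rw [Set.uIcc]
      exact Set.Icc_infinite (inf_lt_sup.2 hne)
    exact hinf (hSfin.subset hreach)
  -- Evaluate h2 at two distinct points to force lam = 0.
  set p₁ : ℝ := a + (b-a)/3 with hp₁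
  set p₂ : ℝ := a + 2*(b-a)/3 with hp₂
  have hm₁ : p₁ ∈ Ioo a b := by rw [hp₁]; constructor <;> [linarith; linarith]
  have hm₂ : p₂ ∈ Ioo a b := by rw [hp₂]; constructor <;> [linarith; linarith]
  have hp₁0 : p₁ ≠ 0 := hx0 _ hm₁
  have hp₂0 : p₂ ≠ 0 := hx0 _ hm₂
  set t₀ : ℝ := t p₁ with ht₀
  have hu₁ : u p₁ = t₀ * p₁ := by rw [ht₀, ht]; field_simp
  have hu₂ : u p₂ = t₀ * p₂ := by
    rw [ht₀, htc p₁ hm₁ p₂ hm₂, ht]; field_simp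
  have E₁ := h2 p₁ hm₁
  have E₂ := h2 p₂ hm₂
  rw [hu₁] at E₁
  rw [hu₂] at E₂
  field_simp at E₁ E₂
  have hd : p₁ ≠ p₂ := by rw [hp₁, hp₂]; intro h; linarith
  have hlam0 : lam * (p₁ * p₂ * (p₂ + p₁) * (p₂ - p₁)) = 0 := by
    linear_combination p₁ * p₂ * (p₂^2 * E₁ - p₁^2 * E₂)
  have hne : p₁ * p₂ * (p₂ + p₁) * (p₂ - p₁) ≠ 0 := by
    have h1' : (0:ℝ) < p₁ := ha.trans hm₁.1
    have h2' : (0:ℝ) < p₂ := ha.trans hm₂.1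
    have h4 : (0:ℝ) < p₂ - p₁ := by rw [hp₁, hp₂]; linarith
    exact ne_of_gt (mul_pos (mul_pos (mul_pos h1' h2') (by linarith)) h4)
  exact hlam ((mul_eq_zero.mp hlam0).resolve_right hne)
end

section
/- Let f, g be smooth, c ≠ 0, α ≠ 0, and suppose on (0,∞) × J: (1 + c² + f₀²)·g''(ỹ) / (1 + (f₀ + c g'(ỹ))² + (g'(ỹ))²) = −α (f₀ + c g'(ỹ)) / x̃ for a constant f₀ (i.e. f' ≡ f₀). Then f₀ + c g' ≡ 0, g'' ≡ 0, and the corresponding graph z = f₀ x + g(y + cx) is the plane z = g₀ y + μ with g₀ = −f₀/c. -/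
open Set

/-- case `f'' = 0` in Theorem 5.1: if `f' ≡ f₀` and
`(1+c²+f₀²) g'' / (1+(f₀+cg')²+(g')²) = −α(f₀+cg')/x̃` holds for all
`x̃ > 0`, `ỹ ∈ J`, then `f₀ + c g' ≡ 0`, `g'' ≡ 0`, and the graph
`z = f₀ x + g(y+cx)` is the plane `z = g₀ y + μ` with `g₀ = −f₀/c`. -/
theorem stmt13 (a b c α f₀ : ℝ) (hab : a < b) (hc : c ≠ 0) (hα : α ≠ 0)
    (g : ℝ → ℝ) (hg : ContDiffOn ℝ (⊤ : ℕ∞) g (Ioo a b))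
    (heq : ∀ xt ∈ Ioi (0 : ℝ), ∀ yt ∈ Ioo a b,
      (1 + c ^ 2 + f₀ ^ 2) * deriv (deriv g) yt /
          (1 + (f₀ + c * deriv g yt) ^ 2 + (deriv g yt) ^ 2)
        = -α * (f₀ + c * deriv g yt) / xt) :
    (∀ yt ∈ Ioo a b, f₀ + c * deriv g yt = 0) ∧
      (∀ yt ∈ Ioo a b, deriv (deriv g) yt = 0) ∧
      ∃ μ : ℝ, ∀ x y : ℝ, y + c * x ∈ Ioo a b →
        f₀ * x + g (y + c * x) = (-f₀ / c) * y + μ := by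
  have h1 : ∀ yt ∈ Ioo a b, f₀ + c * deriv g yt = 0 := by
    intro yt hyt
    have e1 := heq 1 (by norm_num) yt hyt
    have e2 := heq 2 (by norm_num) yt hyt
    have h3 : -α * (f₀ + c * deriv g yt) / 1 = -α * (f₀ + c * deriv g yt) / 2 := by
      rw [← e1, ← e2]
    rw [div_one] at h3
    have h4 : α * (f₀ + c * deriv g yt) = 0 := by linarith
    rcases mul_eq_zero.mp h4 with h | h
    · exact absurd h hα
    · exact h
  have h2 : ∀ yt ∈ Ioo a b, deriv (deriv g) yt = 0 := by
    intro yt hyt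
    have e1 := heq 1 (by norm_num) yt hyt
    rw [h1 yt hyt] at e1
    simp at e1
    have hden : (1 + (deriv g yt) ^ 2 : ℝ) ≠ 0 := by positivity
    have hcoef : (1 + c ^ 2 + f₀ ^ 2 : ℝ) ≠ 0 := by positivity
    rcases e1 with (h | h) | h
    · exact absurd h hcoef
    · exact h
    · exact absurd h hden
  refine ⟨h1, h2, ?_⟩
  -- deriv g = -f₀/c on Ioo a b
  have hdg : ∀ yt ∈ Ioo a b, deriv g yt = -f₀ / c := by
    intro yt hyt
    have := h1 yt hyt
    field_simp
    linarith
  -- g is differentiable on Ioo a b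
  have hopen : IsOpen (Ioo a b) := isOpen_Ioo
  have hdiff : DifferentiableOn ℝ g (Ioo a b) :=
    hg.differentiableOn (by norm_num)
  set h : ℝ → ℝ := fun y => g y - (-f₀ / c) * y with hh
  have hdiffh : DifferentiableOn ℝ h (Ioo a b) := by
    apply hdiff.sub
    exact (differentiable_id.const_mul _).differentiableOn
  have hderivh : ∀ y ∈ Ioo a b, fderivWithin ℝ h (Ioo a b) y = 0 := by
    intro y hy
    have hgd : DifferentiableAt ℝ g y :=
      (hdiff y hy).differentiableAt (hopen.mem_nhds hy)
    have hlin : HasDerivAt (fun y : ℝ => (-f₀ / c) * y) (-f₀ / c) y := by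
      simpa using (hasDerivAt_id y).const_mul (-f₀ / c)
    have hhd : HasDerivAt h (deriv g y - (-f₀ / c)) y := hgd.hasDerivAt.sub hlin
    have : deriv g y - (-f₀ / c) = 0 := by rw [hdg y hy]; ring
    rw [this] at hhd
    rw [hhd.hasFDerivAt.hasFDerivWithinAt.fderivWithin (hopen.uniqueDiffOn y hy)]
    ext
    simp
  set y₀ := (a + b) / 2 with hy₀
  have hy₀mem : y₀ ∈ Ioo a b := ⟨by linarith, by linarith⟩
  refine ⟨h y₀, ?_⟩
  intro x y hmem
  have hconst : h (y + c * x) = h y₀ :=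
    (convex_Ioo a b).is_const_of_fderivWithin_eq_zero hdiffh hderivh hmem hy₀mem
  have : g (y + c * x) = (-f₀ / c) * (y + c * x) + h y₀ := by
    have := hconst
    simp only [hh] at this
    linarith
  rw [this]
  field_simp
  ring
end

section
/- There are no smooth functions f : I → ℝ (I ⊆ (0,∞)) and g : J → ℝ with f'' and g'' nowhere zero, and constants c ≠ 0, α ≠ 0, λ, such that g'''/g'' = λ and, for all x̃ ∈ I, ỹ ∈ J: 2 x̃ f''(x̃) g'(ỹ) + λ x̃ (1 + c² + f'(x̃)²) = −αc(1 + (f'+cg')² + (g')²) − 2α(f'+cg')(c f' + (c²+1) g'). -/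
open Set

/-- A quadratic vanishing at three distinct points has zero leading coefficient. -/
lemma quad_lead_zero {A B C u1 u2 u3 : ℝ} (h12 : u1 ≠ u2) (h13 : u1 ≠ u3) (h23 : u2 ≠ u3)
    (e1 : A * u1 ^ 2 + B * u1 + C = 0) (e2 : A * u2 ^ 2 + B * u2 + C = 0)
    (e3 : A * u3 ^ 2 + B * u3 + C = 0) : A = 0 := by
  have h1 : (u1 - u2) * (A * (u1 + u2) + B) = 0 := by linear_combination e1 - e2
  have h2 : (u2 - u3) * (A * (u2 + u3) + B) = 0 := by linear_combination e2 - e3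
  have h1' := (mul_eq_zero.mp h1).resolve_left (sub_ne_zero.mpr h12)
  have h2' := (mul_eq_zero.mp h2).resolve_left (sub_ne_zero.mpr h23)
  have h3 : (u1 - u3) * A = 0 := by linear_combination h1' - h2'
  exact (mul_eq_zero.mp h3).resolve_left (sub_ne_zero.mpr h13)

/-- the case `g'''/g'' = λ` constant in Theorem 5.1 is
impossible: there are no smooth `f` on `I ⊆ (0,∞)` and `g` on `J`, with
`f''`, `g''` nowhere zero, `c ≠ 0`, `α ≠ 0`, `g''' = λ g''`, satisfying
`2 x̃ f'' g' + λ x̃ (1+c²+(f')²) = −αc(1+(f'+cg')²+(g')²) − 2α(f'+cg')(cf'+(c²+1)g')`. -/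
theorem stmt14 (a b a' b' c α lam : ℝ) (ha : 0 < a) (hab : a < b) (hab' : a' < b')
    (hc : c ≠ 0) (hα : α ≠ 0)
    (f g : ℝ → ℝ) (hf : ContDiffOn ℝ (⊤ : ℕ∞) f (Ioo a b)) (hg : ContDiffOn ℝ (⊤ : ℕ∞) g (Ioo a' b'))
    (hf'' : ∀ x ∈ Ioo a b, deriv (deriv f) x ≠ 0)
    (hg'' : ∀ y ∈ Ioo a' b', deriv (deriv g) y ≠ 0)
    (hg''' : ∀ y ∈ Ioo a' b', deriv (deriv (deriv g)) y = lam * deriv (deriv g) y)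
    (heq : ∀ x ∈ Ioo a b, ∀ y ∈ Ioo a' b',
      2 * x * deriv (deriv f) x * deriv g y + lam * x * (1 + c ^ 2 + (deriv f x) ^ 2)
        = -α * c * (1 + (deriv f x + c * deriv g y) ^ 2 + (deriv g y) ^ 2)
          - 2 * α * (deriv f x + c * deriv g y) *
              (c * deriv f x + (c ^ 2 + 1) * deriv g y)) :
    False := by
  -- g' is injective on (a',b') by Rolle since g'' never vanishes
  have hgd : ContinuousOn (deriv g) (Ioo a' b') :=
    (hg.deriv_of_isOpen (m := 1) isOpen_Ioo (WithTop.coe_le_coe.mpr le_top)).continuousOn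
  have hinj : ∀ y1 ∈ Ioo a' b', ∀ y2 ∈ Ioo a' b', y1 < y2 → deriv g y1 ≠ deriv g y2 := by
    intro y1 hy1 y2 hy2 hlt hEq
    have hsub : Icc y1 y2 ⊆ Ioo a' b' := fun z hz =>
      ⟨lt_of_lt_of_le hy1.1 hz.1, lt_of_le_of_lt hz.2 hy2.2⟩
    obtain ⟨z, hz, hz0⟩ := exists_deriv_eq_zero hlt (hgd.mono hsub) hEq
    exact hg'' z (hsub ⟨le_of_lt hz.1, le_of_lt hz.2⟩) hz0
  -- pick three points
  set y1 := a' + (b' - a') / 4 with hy1def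
  set y2 := a' + (b' - a') / 2 with hy2def
  set y3 := a' + 3 * (b' - a') / 4 with hy3def
  have hy1 : y1 ∈ Ioo a' b' := by constructor <;> [skip; skip] <;> simp [hy1def] <;> linarith
  have hy2 : y2 ∈ Ioo a' b' := by constructor <;> simp [hy2def] <;> linarith
  have hy3 : y3 ∈ Ioo a' b' := by constructor <;> simp [hy3def] <;> linarith
  have h12 : y1 < y2 := by simp [hy1def, hy2def]; linarith
  have h23 : y2 < y3 := by simp [hy2def, hy3def]; linarith
  have h13 : y1 < y3 := h12.trans h23
  set x := (a + b) / 2 with hxdef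
  have hx : x ∈ Ioo a b := by constructor <;> simp [hxdef] <;> linarith
  set F := deriv f x
  set F2 := deriv (deriv f) x
  set A := 3 * α * c * (c ^ 2 + 1) with hA
  set B := 2 * x * F2 + 2 * α * (3 * c ^ 2 + 1) * F with hB
  set C := lam * x * (1 + c ^ 2 + F ^ 2) + α * c * (1 + F ^ 2) + 2 * α * c * F ^ 2 with hC
  have key : ∀ y ∈ Ioo a' b', A * (deriv g y) ^ 2 + B * (deriv g y) + C = 0 := by
    intro y hy
    have h := heq x hx y hy
    rw [hA, hB, hC]
    linear_combination h
  have hA0 : A = 0 :=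
    quad_lead_zero (hinj y1 hy1 y2 hy2 h12) (hinj y1 hy1 y3 hy3 h13) (hinj y2 hy2 y3 hy3 h23)
      (key y1 hy1) (key y2 hy2) (key y3 hy3)
  have hne : α * c * (c ^ 2 + 1) ≠ 0 :=
    mul_ne_zero (mul_ne_zero hα hc) (by positivity)
  apply hne
  rw [hA] at hA0
  linarith
end

section
/- Let g : J → ℝ be smooth with g'' nowhere zero, and suppose [ (g'''/g'')' / g'' ]' = λ₁ g'' on J for a constant λ₁. Then there exist constants λ₂, λ₃, λ₄ such that g'' = (λ₁/6)(g')³ + (λ₂/2)(g')² + λ₃ g' + λ₄ on J. -/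
open Set

lemma const_of_hasDerivAt_zero {a b : ℝ} {f : ℝ → ℝ}
    (hf : ∀ y ∈ Ioo a b, HasDerivAt f 0 y) :
    ∀ x ∈ Ioo a b, ∀ y ∈ Ioo a b, f x = f y := by
  intro x hx y hy
  refine (convex_Ioo a b).is_const_of_fderivWithin_eq_zero
    (fun z hz => ((hf z hz).differentiableAt).differentiableWithinAt) (fun z hz => ?_) hx hy
  rw [fderivWithin_of_isOpen isOpen_Ioo hz, (hf z hz).hasFDerivAt.fderiv]
  ext; simp

/-- Eq. (5.12) → Eq. (5.13): integrating
`[(g'''/g'')'/g'']' = λ₁ g''` three times yields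
`g'' = (λ₁/6)(g')³ + (λ₂/2)(g')² + λ₃ g' + λ₄`. -/
theorem stmt15 (a b lam₁ : ℝ) (hab : a < b) (g : ℝ → ℝ)
    (hg : ContDiffOn ℝ (⊤ : ℕ∞) g (Ioo a b))
    (hg'' : ∀ y ∈ Ioo a b, deriv (deriv g) y ≠ 0)
    (hode : ∀ y ∈ Ioo a b,
      deriv (fun t =>
        deriv (fun s => deriv (deriv (deriv g)) s / deriv (deriv g) s) t /
          deriv (deriv g) t) y = lam₁ * deriv (deriv g) y) :
    ∃ lam₂ lam₃ lam₄ : ℝ, ∀ y ∈ Ioo a b,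
      deriv (deriv g) y = lam₁ / 6 * (deriv g y) ^ 3 + lam₂ / 2 * (deriv g y) ^ 2
        + lam₃ * deriv g y + lam₄ := by
  have hso : IsOpen (Ioo a b) := isOpen_Ioo
  set g1 := deriv g with hg1def
  set g2 := deriv g1 with hg2def
  set g3 := deriv g2 with hg3def
  have h1 : ContDiffOn ℝ (⊤ : ℕ∞) g1 (Ioo a b) := hg.deriv_of_isOpen hso (by simp)
  have h2 : ContDiffOn ℝ (⊤ : ℕ∞) g2 (Ioo a b) := h1.deriv_of_isOpen hso (by simp)
  have h3 : ContDiffOn ℝ (⊤ : ℕ∞) g3 (Ioo a b) := h2.deriv_of_isOpen hso (by simp)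
  set q : ℝ → ℝ := fun t => g3 t / g2 t with hqdef
  have hq : ContDiffOn ℝ (⊤ : ℕ∞) q (Ioo a b) := h3.div h2 hg''
  set q' := deriv q with hq'def
  have hq'c : ContDiffOn ℝ (⊤ : ℕ∞) q' (Ioo a b) := hq.deriv_of_isOpen hso (by simp)
  set r : ℝ → ℝ := fun t => q' t / g2 t with hrdef
  have hr : ContDiffOn ℝ (⊤ : ℕ∞) r (Ioo a b) := hq'c.div h2 hg''
  have dat : ∀ (f : ℝ → ℝ), ContDiffOn ℝ (⊤ : ℕ∞) f (Ioo a b) → ∀ y ∈ Ioo a b,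
      HasDerivAt f (deriv f y) y := fun f hf y hy =>
    ((hf.differentiableOn (by simp)).differentiableAt (hso.mem_nhds hy)).hasDerivAt
  have hy0 : (a + b) / 2 ∈ Ioo a b := ⟨by linarith, by linarith⟩
  -- Step 1: r = lam₁ * g1 + lam₂
  set lam₂ := r ((a+b)/2) - lam₁ * g1 ((a+b)/2) with hlam₂
  have step1 : ∀ y ∈ Ioo a b, r y = lam₁ * g1 y + lam₂ := by
    have hc := const_of_hasDerivAt_zero (f := fun t => r t - lam₁ * g1 t) (fun y hy => by
      have hd := (dat r hr y hy).fun_sub ((dat g1 h1 y hy).const_mul lam₁)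
      have he : deriv r y = lam₁ * g2 y := hode y hy
      rw [he, ← hg2def] at hd
      simpa using hd)
    intro y hy
    have := hc y hy _ hy0
    rw [hlam₂]
    linarith
  -- q' = r * g2
  have hq'eq : ∀ y ∈ Ioo a b, q' y = (lam₁ * g1 y + lam₂) * g2 y := by
    intro y hy
    rw [← step1 y hy, hrdef]
    exact (div_mul_cancel₀ _ (hg'' y hy)).symm
  -- Step 2: q = lam₁/2 g1² + lam₂ g1 + lam₃
  set lam₃ := q ((a+b)/2) - (lam₁/2 * g1 ((a+b)/2) ^ 2 + lam₂ * g1 ((a+b)/2)) with hlam₃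
  have step2 : ∀ y ∈ Ioo a b, q y = lam₁/2 * g1 y ^ 2 + lam₂ * g1 y + lam₃ := by
    have hc := const_of_hasDerivAt_zero
      (f := fun t => q t - (lam₁/2 * g1 t ^ 2 + lam₂ * g1 t)) (fun y hy => by
      have hg1d := dat g1 h1 y hy
      have hd := (dat q hq y hy).fun_sub
        (((hg1d.fun_pow 2).const_mul (lam₁/2)).fun_add (hg1d.const_mul lam₂))
      have he : deriv q y = (lam₁ * g1 y + lam₂) * g2 y := hq'eq y hy
      rw [he, ← hg2def] at hd
      refine hd.congr_deriv ?_
      ring)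
    intro y hy
    have := hc y hy _ hy0
    rw [hlam₃]
    linarith
  -- g3 = q * g2
  have hg3eq : ∀ y ∈ Ioo a b, g3 y = (lam₁/2 * g1 y ^ 2 + lam₂ * g1 y + lam₃) * g2 y := by
    intro y hy
    rw [← step2 y hy, hqdef]
    exact (div_mul_cancel₀ _ (hg'' y hy)).symm
  -- Step 3
  refine ⟨lam₂, lam₃, g2 ((a+b)/2) - (lam₁/6 * g1 ((a+b)/2) ^ 3 + lam₂/2 * g1 ((a+b)/2) ^ 2
    + lam₃ * g1 ((a+b)/2)), ?_⟩
  have hc := const_of_hasDerivAt_zero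
    (f := fun t => g2 t - (lam₁/6 * g1 t ^ 3 + lam₂/2 * g1 t ^ 2 + lam₃ * g1 t)) (fun y hy => by
    have hg1d := dat g1 h1 y hy
    have hd := (dat g2 h2 y hy).fun_sub
      ((((hg1d.fun_pow 3).const_mul (lam₁/6)).fun_add ((hg1d.fun_pow 2).const_mul (lam₂/2))).fun_add
        (hg1d.const_mul lam₃))
    rw [← hg3def] at hd
    have he := hg3eq y hy
    refine hd.congr_deriv ?_
    rw [← hg2def, he]
    ring)
  intro y hy
  have := hc y hy _ hy0
  linarith
end

section
/- Let M² ⊂ ℝ³ be the translation graph z = f(x) + g(y + cx) with c ≠ 0, defined over x > 0, satisfying the singular minimal surface equation 2H = α⟨ξ,u⟩/⟨σ,u⟩ with u = (1,0,0) and α ≠ 0. Then either f'' ≡ 0 and g'' ≡ 0 with f' + c g' ≡ 0 (M is a plane parallel to u), or g'' ≡ 0 and f satisfies the α-catenary-cylinder condition (M is an α-catenary cylinder with rulings parallel to (0,1,λ) where g' ≡ λ). In particular the case f''·g'' nowhere zero cannot occur. -/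
open Set

/-- If a cubic `d0 + d1 t + d2 t² + d3 t³` vanishes at four distinct points,
its coefficients `d1` and `d3` vanish. -/
lemma cubic_aux {d0 d1 d2 d3 t0 t1 t2 t3 : ℝ}
    (h01 : t0 ≠ t1) (h02 : t0 ≠ t2) (h03 : t0 ≠ t3)
    (h12 : t1 ≠ t2) (h13 : t1 ≠ t3) (h23 : t2 ≠ t3)
    (e0 : d0 + d1 * t0 + d2 * t0 ^ 2 + d3 * t0 ^ 3 = 0)
    (e1 : d0 + d1 * t1 + d2 * t1 ^ 2 + d3 * t1 ^ 3 = 0)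
    (e2 : d0 + d1 * t2 + d2 * t2 ^ 2 + d3 * t2 ^ 3 = 0)
    (e3 : d0 + d1 * t3 + d2 * t3 ^ 2 + d3 * t3 ^ 3 = 0) :
    d1 = 0 ∧ d3 = 0 := by
  have k1 : d1 + d2 * (t0 + t1) + d3 * (t0 ^ 2 + t0 * t1 + t1 ^ 2) = 0 := by
    have h : t0 - t1 ≠ 0 := sub_ne_zero.mpr h01
    have hz : (t0 - t1) * (d1 + d2 * (t0 + t1) + d3 * (t0 ^ 2 + t0 * t1 + t1 ^ 2)) = 0 := by
      linear_combination e0 - e1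
    exact (mul_eq_zero.mp hz).resolve_left h
  have k2 : d1 + d2 * (t0 + t2) + d3 * (t0 ^ 2 + t0 * t2 + t2 ^ 2) = 0 := by
    have h : t0 - t2 ≠ 0 := sub_ne_zero.mpr h02
    have hz : (t0 - t2) * (d1 + d2 * (t0 + t2) + d3 * (t0 ^ 2 + t0 * t2 + t2 ^ 2)) = 0 := by
      linear_combination e0 - e2
    exact (mul_eq_zero.mp hz).resolve_left h
  have k3 : d1 + d2 * (t0 + t3) + d3 * (t0 ^ 2 + t0 * t3 + t3 ^ 2) = 0 := by
    have h : t0 - t3 ≠ 0 := sub_ne_zero.mpr h03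
    have hz : (t0 - t3) * (d1 + d2 * (t0 + t3) + d3 * (t0 ^ 2 + t0 * t3 + t3 ^ 2)) = 0 := by
      linear_combination e0 - e3
    exact (mul_eq_zero.mp hz).resolve_left h
  have m1 : d2 + d3 * (t0 + t1 + t2) = 0 := by
    have h : t1 - t2 ≠ 0 := sub_ne_zero.mpr h12
    have hz : (t1 - t2) * (d2 + d3 * (t0 + t1 + t2)) = 0 := by
      linear_combination k1 - k2
    exact (mul_eq_zero.mp hz).resolve_left h
  have m2 : d2 + d3 * (t0 + t1 + t3) = 0 := by
    have h : t1 - t3 ≠ 0 := sub_ne_zero.mpr h13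
    have hz : (t1 - t3) * (d2 + d3 * (t0 + t1 + t3)) = 0 := by
      linear_combination k1 - k3
    exact (mul_eq_zero.mp hz).resolve_left h
  have hd3 : d3 = 0 := by
    have h : t2 - t3 ≠ 0 := sub_ne_zero.mpr h23
    have hz : (t2 - t3) * d3 = 0 := by linear_combination m1 - m2
    exact (mul_eq_zero.mp hz).resolve_left h
  have hd2 : d2 = 0 := by linear_combination m1 - (t0 + t1 + t2) * hd3
  have hd1 : d1 = 0 := by
    linear_combination k1 - (t0 + t1) * hd2 - (t0 ^ 2 + t0 * t1 + t1 ^ 2) * hd3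
  exact ⟨hd1, hd3⟩

set_option maxHeartbeats 1000000 in
/-- Theorem 5.1: a singular minimal translation graph
`z = f(x) + g(y + cx)`, `c ≠ 0`, over `x̃ ∈ I ⊆ (0,∞)`, i.e. satisfying
Eq. (5.2)
`[(1+(g')²) f'' + (1+c²+(f')²) g''] / [1 + (f'+cg')² + (g')²] = −α(f'+cg')/x̃`
with `α ≠ 0`, is either a plane parallel to `u = (1,0,0)`
(`f'' ≡ 0`, `g'' ≡ 0` and `f' + c g' ≡ 0`), or an `α`-catenary cylinder with
rulings parallel to `(0,1,λ)`: `g' ≡ λ` (so `g'' ≡ 0`) and `f` satisfies the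
`α`-catenary-cylinder ODE.  In particular `f''·g''` nowhere zero is
impossible. -/
theorem stmt16 (a b a' b' c α : ℝ) (ha : 0 < a) (hab : a < b) (hab' : a' < b')
    (hc : c ≠ 0) (hα : α ≠ 0)
    (f g : ℝ → ℝ) (hf : ContDiffOn ℝ (⊤ : ℕ∞) f (Ioo a b)) (hg : ContDiffOn ℝ (⊤ : ℕ∞) g (Ioo a' b'))
    (hSM : ∀ x ∈ Ioo a b, ∀ y ∈ Ioo a' b',
      ((1 + (deriv g y) ^ 2) * deriv (deriv f) x
          + (1 + c ^ 2 + (deriv f x) ^ 2) * deriv (deriv g) y) /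
          (1 + (deriv f x + c * deriv g y) ^ 2 + (deriv g y) ^ 2)
        = -α * (deriv f x + c * deriv g y) / x) :
    ((∀ x ∈ Ioo a b, deriv (deriv f) x = 0) ∧
      (∀ y ∈ Ioo a' b', deriv (deriv g) y = 0) ∧
      (∀ x ∈ Ioo a b, ∀ y ∈ Ioo a' b', deriv f x + c * deriv g y = 0)) ∨
    ((∀ y ∈ Ioo a' b', deriv (deriv g) y = 0) ∧
      ∃ lam : ℝ, (∀ y ∈ Ioo a' b', deriv g y = lam) ∧
        ∀ x ∈ Ioo a b,
          (1 + lam ^ 2) * deriv (deriv f) x /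
              (1 + (deriv f x + c * lam) ^ 2 + lam ^ 2)
            = -α * (deriv f x + c * lam) / x) := by
  right
  set p := deriv f with hp
  set q := deriv g with hq
  -- Clear denominators in the singular minimal surface equation.
  have E : ∀ x ∈ Ioo a b, ∀ y ∈ Ioo a' b',
      x * ((1 + q y ^ 2) * deriv p x + (1 + c ^ 2 + p x ^ 2) * deriv q y)
        = -α * (p x + c * q y) * (1 + (p x + c * q y) ^ 2 + q y ^ 2) := by
    intro x hx y hy
    have hx0 : x ≠ 0 := ne_of_gt (lt_trans ha hx.1)
    have hD : (1 + (p x + c * q y) ^ 2 + q y ^ 2) ≠ 0 := by positivity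
    have h := hSM x hx y hy
    rw [div_eq_div_iff hD hx0] at h
    linear_combination h
  -- `q = deriv g` is continuous on the open interval.
  have hqcont : ContinuousOn q (Ioo a' b') :=
    hg.continuousOn_deriv_of_isOpen isOpen_Ioo (by simp)
  -- Main claim: `q` is constant on `Ioo a' b'`.
  have key : ∀ y₁ ∈ Ioo a' b', ∀ y₂ ∈ Ioo a' b', ¬ (q y₁ < q y₂) := by
    intro y₁ hy₁ y₂ hy₂ hlt
    set δ := (q y₂ - q y₁) / 4 with hδdef
    have hδpos : 0 < δ := by simp only [hδdef]; linarith
    have hsub : uIcc y₁ y₂ ⊆ Ioo a' b' :=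
      Set.ordConnected_Ioo.uIcc_subset hy₁ hy₂
    have hIVT := intermediate_value_uIcc (hqcont.mono hsub)
    -- four distinct values attained by `q`
    have hmem : ∀ i : ℝ, 0 ≤ i → i ≤ 3 → q y₁ + i * δ ∈ uIcc (q y₁) (q y₂) := by
      intro i hi0 hi3
      rw [uIcc_of_le (le_of_lt hlt)]
      constructor
      · nlinarith
      · nlinarith
    obtain ⟨z0, hz0, hqz0⟩ := hIVT (hmem 0 (by norm_num) (by norm_num))
    obtain ⟨z1, hz1, hqz1⟩ := hIVT (hmem 1 (by norm_num) (by norm_num))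
    obtain ⟨z2, hz2, hqz2⟩ := hIVT (hmem 2 (by norm_num) (by norm_num))
    obtain ⟨z3, hz3, hqz3⟩ := hIVT (hmem 3 (by norm_num) (by norm_num))
    -- two distinct points in (a, b)
    set x₁ := (3 * a + b) / 4 with hx₁def
    set x₂ := (a + 3 * b) / 4 with hx₂def
    have hx₁ : x₁ ∈ Ioo a b := ⟨by simp only [hx₁def]; linarith, by simp only [hx₁def]; linarith⟩
    have hx₂ : x₂ ∈ Ioo a b := ⟨by simp only [hx₂def]; linarith, by simp only [hx₂def]; linarith⟩
    have hx₁₂ : x₁ < x₂ := by simp only [hx₁def, hx₂def]; linarith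
    set A₁ := x₁ * (1 + c ^ 2 + p x₁ ^ 2) with hA₁def
    set A₂ := x₂ * (1 + c ^ 2 + p x₂ ^ 2) with hA₂def
    have hA₁pos : 0 < A₁ := by
      have h1 : 0 < x₁ := lt_trans ha hx₁.1
      have h2 : 0 < 1 + c ^ 2 + p x₁ ^ 2 := by positivity
      exact mul_pos h1 h2
    -- the cubic identity in the value of `q`
    have ev : ∀ z ∈ Ioo a' b',
        (A₂ * (x₁ * deriv p x₁ + α * p x₁ * (1 + p x₁ ^ 2))
            - A₁ * (x₂ * deriv p x₂ + α * p x₂ * (1 + p x₂ ^ 2)))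
          + (α * c * (A₂ * (3 * p x₁ ^ 2 + 1) - A₁ * (3 * p x₂ ^ 2 + 1))) * q z
          + (A₂ * (x₁ * deriv p x₁ + α * p x₁ * (1 + 3 * c ^ 2))
            - A₁ * (x₂ * deriv p x₂ + α * p x₂ * (1 + 3 * c ^ 2))) * q z ^ 2
          + (α * c * (1 + c ^ 2) * (A₂ - A₁)) * q z ^ 3 = 0 := by
      intro z hz
      have e₁ := E x₁ hx₁ z hz
      have e₂ := E x₂ hx₂ z hz
      simp only [hA₁def, hA₂def]
      linear_combination (x₂ * (1 + c ^ 2 + p x₂ ^ 2)) * e₁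
        - (x₁ * (1 + c ^ 2 + p x₁ ^ 2)) * e₂
    have e0 := ev z0 (hsub hz0); rw [hqz0] at e0
    have e1 := ev z1 (hsub hz1); rw [hqz1] at e1
    have e2 := ev z2 (hsub hz2); rw [hqz2] at e2
    have e3 := ev z3 (hsub hz3); rw [hqz3] at e3
    have h01 : q y₁ + 0 * δ ≠ q y₁ + 1 * δ := ne_of_lt (by linarith)
    have h02 : q y₁ + 0 * δ ≠ q y₁ + 2 * δ := ne_of_lt (by linarith)
    have h03 : q y₁ + 0 * δ ≠ q y₁ + 3 * δ := ne_of_lt (by linarith)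
    have h12 : q y₁ + 1 * δ ≠ q y₁ + 2 * δ := ne_of_lt (by linarith)
    have h13 : q y₁ + 1 * δ ≠ q y₁ + 3 * δ := ne_of_lt (by linarith)
    have h23 : q y₁ + 2 * δ ≠ q y₁ + 3 * δ := ne_of_lt (by linarith)
    obtain ⟨hd1, hd3⟩ := cubic_aux h01 h02 h03 h12 h13 h23 e0 e1 e2 e3
    -- from the cubic coefficient: A₁ = A₂
    have hαc : α * c * (1 + c ^ 2) ≠ 0 :=
      mul_ne_zero (mul_ne_zero hα hc) (by positivity)
    have hA : A₂ - A₁ = 0 := (mul_eq_zero.mp hd3).resolve_left hαc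
    -- from the linear coefficient: p x₁ ^ 2 = p x₂ ^ 2
    have hαc' : α * c ≠ 0 := mul_ne_zero hα hc
    have hinner : A₂ * (3 * p x₁ ^ 2 + 1) - A₁ * (3 * p x₂ ^ 2 + 1) = 0 :=
      (mul_eq_zero.mp hd1).resolve_left hαc'
    have hpp : p x₁ ^ 2 = p x₂ ^ 2 := by
      have hA' : A₂ = A₁ := by linarith
      rw [hA'] at hinner
      have h3 : A₁ * (3 * p x₁ ^ 2 - 3 * p x₂ ^ 2) = 0 := by linear_combination hinner
      have := (mul_eq_zero.mp h3).resolve_left (ne_of_gt hA₁pos)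
      linarith
    -- contradiction: x₁ ≠ x₂ yet A₁ = A₂ with p x₁² = p x₂²
    have hfinal : (x₂ - x₁) * (1 + c ^ 2 + p x₁ ^ 2) = 0 := by
      simp only [hA₂def, hA₁def] at hA
      linear_combination hA + x₂ * hpp
    have hpos1 : 0 < x₂ - x₁ := by linarith
    have hpos2 : 0 < 1 + c ^ 2 + p x₁ ^ 2 := by positivity
    nlinarith
  have hconst : ∀ y₁ ∈ Ioo a' b', ∀ y₂ ∈ Ioo a' b', q y₁ = q y₂ := by
    intro y₁ hy₁ y₂ hy₂
    rcases lt_trichotomy (q y₁) (q y₂) with h | h | h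
    · exact absurd h (key y₁ hy₁ y₂ hy₂)
    · exact h
    · exact absurd h (key y₂ hy₂ y₁ hy₁)
  -- set up lam
  have hy₀ : (a' + b') / 2 ∈ Ioo a' b' := ⟨by linarith, by linarith⟩
  set lam := q ((a' + b') / 2) with hlamdef
  have hql : ∀ y ∈ Ioo a' b', q y = lam := fun y hy => hconst y hy _ hy₀
  have hg'' : ∀ y ∈ Ioo a' b', deriv q y = 0 := by
    intro y hy
    have hev : q =ᶠ[nhds y] (fun _ => lam) := by
      filter_upwards [isOpen_Ioo.mem_nhds hy] with z hz using hql z hz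
    rw [hev.deriv_eq]
    exact deriv_const y lam
  refine ⟨hg'', lam, hql, ?_⟩
  intro x hx
  have h := hSM x hx _ hy₀
  rw [hql _ hy₀, hg'' _ hy₀] at h
  rw [show (1 + lam ^ 2) * deriv p x + (1 + c ^ 2 + p x ^ 2) * 0
      = (1 + lam ^ 2) * deriv p x by ring] at h
  exact h
end

section
/- There are no constants α ≠ 0, c ≠ 0, λ₁ ≠ 0, λ₃ and a smooth function f : I → ℝ (I ⊆ (0,∞)) with f'' nowhere zero, satisfying both 1 + c² + (f')² = −3αc(c²+1)/(λ₁ x̃) and λ₃(1 + c² + (f')²) + αc/x̃ + 3αc (f')²/x̃ = 0 on I. -/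
open Set

/-- final contradiction of Theorem 5.1, Eqs. (5.11), (5.15):
there is no smooth `f` on `I ⊆ (0,∞)` with `f''` nowhere zero and constants
`α ≠ 0`, `c ≠ 0`, `λ₁ ≠ 0`, `λ₃` with
`1 + c² + (f')² = −3αc(c²+1)/(λ₁ x̃)` and
`λ₃(1+c²+(f')²) + αc/x̃ + 3αc(f')²/x̃ = 0` on `I`. -/
theorem stmt17 (a b c α lam₁ lam₃ : ℝ) (ha : 0 < a) (hab : a < b)
    (hc : c ≠ 0) (hα : α ≠ 0) (hlam₁ : lam₁ ≠ 0)
    (f : ℝ → ℝ) (hf : ContDiffOn ℝ (⊤ : ℕ∞) f (Ioo a b))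
    (hf'' : ∀ x ∈ Ioo a b, deriv (deriv f) x ≠ 0)
    (h1 : ∀ x ∈ Ioo a b,
      1 + c ^ 2 + (deriv f x) ^ 2 = -3 * α * c * (c ^ 2 + 1) / (lam₁ * x))
    (h2 : ∀ x ∈ Ioo a b,
      lam₃ * (1 + c ^ 2 + (deriv f x) ^ 2) + α * c / x
        + 3 * α * c * (deriv f x) ^ 2 / x = 0) :
    False := by
  set K : ℝ := lam₃ * (c ^ 2 + 1) / lam₁ - 1 / 3 with hK
  have hKeq : ∀ x ∈ Ioo a b, (deriv f x) ^ 2 = K := by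
    intro x hx
    have hx0 : x ≠ 0 := ne_of_gt (lt_trans ha hx.1)
    have e1 := h1 x hx
    have e2 := h2 x hx
    rw [e1] at e2
    field_simp at e2
    have hacx : α * c * x ^ 2 ≠ 0 := by positivity
    have e4 : (deriv f x ^ 2 * lam₁ * 3) * (α * c * x ^ 2)
        = (lam₃ * (c ^ 2 + 1) * 3 - lam₁) * (α * c * x ^ 2) := by
      linear_combination x ^ 2 * e2
    have e5 := mul_right_cancel₀ hacx e4
    rw [hK]
    field_simp
    linear_combination e5
  set x₀ : ℝ := (a + b) / 2 with hx₀
  have hx₀mem : x₀ ∈ Ioo a b := ⟨by simp [hx₀]; linarith, by simp [hx₀]; linarith⟩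
  have hnhds : Ioo a b ∈ nhds x₀ := isOpen_Ioo.mem_nhds hx₀mem
  -- deriv f is differentiable at x₀
  have hdf : ContDiffOn ℝ (⊤ : ℕ∞) (deriv f) (Ioo a b) := by
    exact hf.deriv_of_isOpen isOpen_Ioo (by simp)
  have hdiff : DifferentiableAt ℝ (deriv f) x₀ := by
    have := (hdf.differentiableOn (by simp)).differentiableAt hnhds
    exact this
  have hD : HasDerivAt (fun x => (deriv f x) ^ 2)
      (2 * (deriv f x₀) ^ 1 * deriv (deriv f) x₀) x₀ := by
    have := hdiff.hasDerivAt.fun_pow 2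
    simpa using this
  have hEv : (fun x => (deriv f x) ^ 2) =ᶠ[nhds x₀] fun _ => K :=
    Filter.eventually_of_mem hnhds fun x hx => hKeq x hx
  have hD0 : HasDerivAt (fun x => (deriv f x) ^ 2) 0 x₀ :=
    (hasDerivAt_const x₀ K).congr_of_eventuallyEq hEv
  have hzero : 2 * (deriv f x₀) ^ 1 * deriv (deriv f) x₀ = 0 := hD.unique hD0
  have hf''x₀ := hf'' x₀ hx₀mem
  have hdf0 : deriv f x₀ = 0 := by
    rcases mul_eq_zero.mp hzero with h | h
    · rcases mul_eq_zero.mp h with h | h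
      · norm_num at h
      · simpa using h
    · exact absurd h hf''x₀
  have hK0 : K = 0 := by
    have := hKeq x₀ hx₀mem
    rw [hdf0] at this
    simpa using this.symm
  have hEv' : deriv f =ᶠ[nhds x₀] fun _ => (0 : ℝ) := by
    refine Filter.eventually_of_mem hnhds fun x hx => ?_
    have := hKeq x hx
    rw [hK0] at this
    exact pow_eq_zero_iff (n := 2) (by norm_num) |>.mp this
  have : deriv (deriv f) x₀ = 0 := by
    rw [hEv'.deriv_eq]
    simp
  exact hf''x₀ this
end
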